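/- Let τ ∈ (0,1) and let p ≥ 0 be an even integer. Define the holomorphic spectral moment of the symplectic elliptic Ginibre ensemble by M^s_τ(p,N) := (1/2)·Σ_{k=0}^{2N−1} A_τ(p,k,k) − (1/2)·Σ_{j=0}^{N−1} ((2N)!!/(2j)!!)·A_τ(p,2N,2j), where (2m)!! := 2^m·m!. Then lim_{N→∞} M^s_τ(p,N) / (2^{p/2}·N^{p/2+1}) = τ^{p/2}·(1/(p/2+1))·binom(p, p/2). -/

import Mathlib

open Finset Filter

/-- `1/n!` for an integer `n`, with the convention that `1/n! = 0` for negative `n`. -/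
noncomputable def invfac (n : ℤ) : ℝ := if 0 ≤ n then ((n.toNat).factorial : ℝ)⁻¹ else 0

/-- Binomial coefficient `binom(n, m)` for `n : ℕ`, `m : ℤ`, zero for `m < 0` or `m > n`. -/
noncomputable def zbinom (n : ℕ) (m : ℤ) : ℝ :=
  if 0 ≤ m ∧ m ≤ (n : ℤ) then (n.choose m.toNat : ℝ) else 0

/-- The Hermite expansion coefficients `A_τ(p, j, k)`. -/
noncomputable def Aher (τ : ℝ) (p : ℕ) (j : ℤ) (k : ℕ) : ℝ :=
  if 0 ≤ j ∧ |j - (k : ℤ)| ≤ (p : ℤ) ∧ (j - (k : ℤ)) % 2 = (p : ℤ) % 2 then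
    τ ^ ((((p : ℤ) + k - j) / 2).toNat) *
      ∑ l ∈ Finset.range (p / 2 + 1),
        (p.factorial : ℝ) * ((2 : ℝ) ^ l * (l.factorial : ℝ))⁻¹ *
          invfac (((p : ℤ) - k + j) / 2 - l) *
          zbinom k (((p : ℤ) + k - j) / 2 - l)
  else 0

open Filter

/-- The holomorphic spectral moment `M^s_τ(p, N)` of the symplectic elliptic Ginibre ensemble:
`M^s_τ(p,N) = (1/2) ∑_{k<2N} A_τ(p,k,k) − (1/2) ∑_{j<N} ((2N)!!/(2j)!!) A_τ(p,2N,2j)`,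
where `(2m)!! = 2^m m!`. -/
noncomputable def Msymp (τ : ℝ) (p N : ℕ) : ℝ :=
  (1 / 2) * ∑ k ∈ Finset.range (2 * N), Aher τ p (k : ℤ) k
    - (1 / 2) * ∑ j ∈ Finset.range N,
        (((2 : ℝ) ^ N * (N.factorial : ℝ)) / ((2 : ℝ) ^ j * (j.factorial : ℝ))) *
          Aher τ p ((2 * N : ℕ) : ℤ) (2 * j)

/-! For `p = 2q` the diagonal coefficient is
`A_τ(2q, k, k) = τ^q ∑_{l ≤ q} (2q)! / (2^l l! (q-l)!) binom(k, q-l)`, so by the hockey-stick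
identity the first sum of `M^s_τ(2q, N)` is a combination of the `binom(2N, q-l+1)`. Only `l = 0`
has order `N^{q+1}`, contributing `τ^q (2q)! / (q! (q+1)!) (2N)^{q+1} / 2`, which is the Catalan
number `binom(2q, q) / (q+1)` times `τ^q 2^q N^{q+1}`.
In the second sum `A_τ(2q, 2N, 2j)` vanishes unless `N - j ≤ q`, and each of these at most `q`
terms is `O(N^q)`: `(2N)!!/(2j)!! ≤ (2N)^{N-j}` while `|A_τ(2q, 2N, 2j)| = O(N^{q-(N-j)})`. -/

open Asymptotics Topology
open scoped Nat

theorem Nat.sum_range_choose_eq_choose_succ (n k : ℕ) :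
    ∑ m ∈ range n, m.choose k = n.choose (k + 1) := by
  induction n with
  | zero => simp
  | succ n ih => rw [sum_range_succ, ih, Nat.choose_succ_succ', add_comm]

theorem tendsto_choose_div_pow_self (k : ℕ) :
    Tendsto (fun n : ℕ => (n.choose k : ℝ) / (n : ℝ) ^ k) atTop (𝓝 (k ! : ℝ)⁻¹) := by
  have h := (isEquivalent_choose k).div (IsEquivalent.refl (u := fun n : ℕ => (n : ℝ) ^ k))
  refine h.symm.tendsto_nhds (tendsto_const_nhds.congr' ?_)
  filter_upwards [eventually_ge_atTop 1] with n hn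
  have : (n : ℝ) ≠ 0 := by positivity
  simp only [Pi.div_apply]
  field_simp

theorem tendsto_choose_div_pow_of_lt {k r : ℕ} (h : k < r) :
    Tendsto (fun n : ℕ => (n.choose k : ℝ) / (n : ℝ) ^ r) atTop (𝓝 0) :=
  IsLittleO.tendsto_div_nhds_zero <| (isTheta_choose k).isBigO.trans_isLittleO <|
    (isLittleO_pow_pow_atTop_of_lt h).comp_tendsto tendsto_natCast_atTop_atTop

theorem invfac_natCast (n : ℕ) : invfac n = (n ! : ℝ)⁻¹ := by
  simp [invfac]

theorem invfac_nonneg (n : ℤ) : 0 ≤ invfac n := by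
  unfold invfac; split <;> positivity

theorem invfac_le_one (n : ℤ) : invfac n ≤ 1 := by
  unfold invfac; split
  · exact inv_le_one_of_one_le₀ (mod_cast Nat.factorial_pos _)
  · exact zero_le_one

theorem zbinom_natCast (n m : ℕ) : zbinom n m = n.choose m := by
  unfold zbinom
  split_ifs with h
  · simp
  · rw [Nat.choose_eq_zero_of_lt (by omega), Nat.cast_zero]

theorem zbinom_nonneg (n : ℕ) (m : ℤ) : 0 ≤ zbinom n m := by
  unfold zbinom; split <;> positivity

theorem zbinom_le_succ_pow (n e : ℕ) {m : ℤ} (hm : m ≤ e) : zbinom n m ≤ ((n : ℝ) + 1) ^ e := by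
  unfold zbinom; split
  · calc (n.choose m.toNat : ℝ) ≤ (n : ℝ) ^ m.toNat := mod_cast Nat.choose_le_pow n _
      _ ≤ ((n : ℝ) + 1) ^ m.toNat := by gcongr; linarith
      _ ≤ ((n : ℝ) + 1) ^ e := pow_le_pow_right₀ (le_add_of_nonneg_left n.cast_nonneg) (by omega)
  · positivity

theorem Aher_two_mul_self (τ : ℝ) (q k : ℕ) :
    Aher τ (2 * q) k k = τ ^ q * ∑ l ∈ range (q + 1),
      ((2 * q)! : ℝ) * ((2 : ℝ) ^ l * (l ! : ℝ))⁻¹ * ((q - l)! : ℝ)⁻¹ * (k.choose (q - l) : ℝ) := by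
  have hq : ((((2 * q : ℕ) : ℤ) + k - k) / 2).toNat = q := by omega
  rw [Aher, if_pos (by simp), hq, Nat.mul_div_cancel_left q two_pos]
  congr 1
  refine sum_congr rfl fun l hl => ?_
  have hlq := mem_range.mp hl
  rw [show (((2 * q : ℕ) : ℤ) - k + k) / 2 - l = ((q - l : ℕ) : ℤ) by omega,
    show (((2 * q : ℕ) : ℤ) + k - k) / 2 - l = ((q - l : ℕ) : ℤ) by omega,
    invfac_natCast, zbinom_natCast]

theorem sum_range_Aher_two_mul_self (τ : ℝ) (q n : ℕ) :
    ∑ k ∈ range n, Aher τ (2 * q) k k = τ ^ q * ∑ l ∈ range (q + 1),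
      ((2 * q)! : ℝ) * ((2 : ℝ) ^ l * (l ! : ℝ))⁻¹ * ((q - l)! : ℝ)⁻¹ *
        (n.choose (q - l + 1) : ℝ) := by
  simp_rw [Aher_two_mul_self, ← mul_sum]
  rw [sum_comm]
  simp_rw [← mul_sum, ← Nat.cast_sum, Nat.sum_range_choose_eq_choose_succ]

theorem factorial_two_mul_div_factorial_mul_factorial_succ (q : ℕ) :
    ((2 * q)! : ℝ) / (q ! * (q + 1)!) = ((q + 1 : ℕ) : ℝ)⁻¹ * ((2 * q).choose q : ℝ) := by
  rw [Nat.cast_choose ℝ (by omega : q ≤ 2 * q), show 2 * q - q = q by omega, Nat.factorial_succ]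
  push_cast
  field_simp

theorem tendsto_sum_range_Aher_two_mul_self_div_pow (τ : ℝ) (q : ℕ) :
    Tendsto (fun n : ℕ => (∑ k ∈ range n, Aher τ (2 * q) k k) / (n : ℝ) ^ (q + 1)) atTop
      (𝓝 (τ ^ q * ((q + 1 : ℕ) : ℝ)⁻¹ * ((2 * q).choose q : ℝ))) := by
  set c : ℕ → ℝ := fun l => ((2 * q)! : ℝ) * ((2 : ℝ) ^ l * (l ! : ℝ))⁻¹ * ((q - l)! : ℝ)⁻¹
  -- only the `l = 0` term has the top degree `q + 1` in `n`
  have hlower : ∀ l ∈ range q, Tendsto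
      (fun n : ℕ => c (l + 1) * ((n.choose (q - (l + 1) + 1) : ℝ) / (n : ℝ) ^ (q + 1)))
      atTop (𝓝 0) := fun l hl => by
    have hlq := mem_range.mp hl
    simpa using (tendsto_choose_div_pow_of_lt (by omega)).const_mul (c (l + 1))
  have htop := (tendsto_choose_div_pow_self (q + 1)).const_mul (c 0)
  convert ((tendsto_finsetSum _ hlower).add htop).const_mul (τ ^ q) using 1
  · ext n
    rw [sum_range_Aher_two_mul_self, sum_range_succ', mul_div_assoc, add_div, sum_div]
    simp only [mul_div_assoc, c, Nat.sub_zero]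
  · rw [sum_const_zero, zero_add, mul_assoc, ← factorial_two_mul_div_factorial_mul_factorial_succ]
    simp only [c, pow_zero, Nat.factorial_zero, Nat.cast_one, mul_one, inv_one, Nat.sub_zero]
    congr 1
    ring

theorem Aher_eq_zero_of_lt_abs (τ : ℝ) (p : ℕ) {j : ℤ} {k : ℕ} (h : (p : ℤ) < |j - k|) :
    Aher τ p j k = 0 :=
  if_neg fun hc => absurd hc.2.1 (not_le.mpr h)

theorem abs_Aher_le (τ : ℝ) (p : ℕ) (j : ℤ) (k : ℕ) :
    |Aher τ p j k| ≤
      (p / 2 + 1 : ℕ) * p ! * (|τ| * ((k : ℝ) + 1)) ^ ((((p : ℤ) + k - j) / 2).toNat) := by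
  unfold Aher
  split
  · set e := (((p : ℤ) + k - j) / 2).toNat
    have hterm : ∀ l ∈ range (p / 2 + 1),
        |(p ! : ℝ) * ((2 : ℝ) ^ l * (l ! : ℝ))⁻¹ * invfac (((p : ℤ) - k + j) / 2 - l) *
          zbinom k (((p : ℤ) + k - j) / 2 - l)| ≤ p ! * ((k : ℝ) + 1) ^ e := by
      intro l _
      have h2l : ((2 : ℝ) ^ l * (l ! : ℝ))⁻¹ ≤ 1 := inv_le_one_of_one_le₀
        (one_le_mul_of_one_le_of_one_le (one_le_pow₀ one_le_two) (mod_cast l.factorial_pos))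
      have := invfac_nonneg (((p : ℤ) - k + j) / 2 - l)
      have := zbinom_nonneg k (((p : ℤ) + k - j) / 2 - l)
      rw [abs_of_nonneg (by positivity)]
      calc _ ≤ (p ! : ℝ) * 1 * 1 * ((k : ℝ) + 1) ^ e := by
            gcongr
            · exact invfac_le_one _
            · exact zbinom_le_succ_pow k e (by omega)
        _ = _ := by ring
    calc _ = |τ| ^ e * |∑ l ∈ range (p / 2 + 1), (p ! : ℝ) * ((2 : ℝ) ^ l * (l ! : ℝ))⁻¹ *
            invfac (((p : ℤ) - k + j) / 2 - l) * zbinom k (((p : ℤ) + k - j) / 2 - l)| := by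
          rw [abs_mul, abs_pow]
      _ ≤ |τ| ^ e * ((p / 2 + 1 : ℕ) * (p ! * ((k : ℝ) + 1) ^ e)) := by
          gcongr
          refine (abs_sum_le_sum_abs _ _).trans ?_
          simpa using sum_le_card_nsmul _ _ _ hterm
      _ = _ := by rw [mul_pow]; ring
  · rw [abs_zero]; positivity

theorem two_pow_mul_factorial_div_le {j N : ℕ} (h : j ≤ N) :
    ((2 : ℝ) ^ N * N !) / ((2 : ℝ) ^ j * j !) ≤ (2 * N) ^ (N - j) := by
  have hfac : (N ! : ℝ) = j ! * N.descFactorial (N - j) := by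
    rw [← Nat.factorial_mul_descFactorial (Nat.sub_le N j), Nat.sub_sub_self h, Nat.cast_mul]
  have hpow : (2 : ℝ) ^ N = 2 ^ j * 2 ^ (N - j) := by rw [← pow_add, Nat.add_sub_cancel' h]
  calc _ = (2 : ℝ) ^ (N - j) * N.descFactorial (N - j) := by
        rw [hfac, hpow]; field_simp
    _ ≤ _ := by
        rw [mul_pow]; gcongr; exact_mod_cast Nat.descFactorial_le_pow N _

theorem abs_two_pow_mul_factorial_div_mul_Aher_le (τ : ℝ) (p : ℕ) {j N : ℕ} (hj : j < N) :
    |((2 : ℝ) ^ N * N !) / ((2 : ℝ) ^ j * j !) * Aher τ p ((2 * N : ℕ) : ℤ) (2 * j)| ≤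
      (p / 2 + 1 : ℕ) * p ! * ((|τ| + 1) * (2 * N)) ^ (p / 2) := by
  rcases lt_or_ge p (2 * (N - j)) with hp | hp
  · rw [Aher_eq_zero_of_lt_abs τ p (by rw [abs_of_pos (by omega)]; omega), mul_zero, abs_zero]
    positivity
  have he : (((p : ℤ) + (2 * j : ℕ) - (2 * N : ℕ)) / 2).toNat = p / 2 - (N - j) := by omega
  have hX : |τ| * (((2 * j : ℕ) : ℝ) + 1) ≤ (|τ| + 1) * (2 * N) := by
    gcongr
    · linarith
    · exact_mod_cast (by omega : 2 * j + 1 ≤ 2 * N)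
  have h2N : (2 * N : ℝ) ≤ (|τ| + 1) * (2 * N) :=
    le_mul_of_one_le_left (by positivity) (by linarith [abs_nonneg τ])
  rw [abs_mul, abs_of_nonneg (by positivity)]
  calc _ ≤ (2 * N : ℝ) ^ (N - j) * ((p / 2 + 1 : ℕ) * p ! *
          (|τ| * (((2 * j : ℕ) : ℝ) + 1)) ^ (p / 2 - (N - j))) := by
        rw [← he]
        exact mul_le_mul (two_pow_mul_factorial_div_le hj.le) (abs_Aher_le _ _ _ _)
          (abs_nonneg _) (by positivity)
    _ ≤ ((|τ| + 1) * (2 * N)) ^ (N - j) * ((p / 2 + 1 : ℕ) * p ! *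
          ((|τ| + 1) * (2 * N)) ^ (p / 2 - (N - j))) := by gcongr
    _ = _ := by rw [mul_left_comm, ← pow_add, Nat.add_sub_cancel' (by omega)]

noncomputable def MsympCorrection (τ : ℝ) (p N : ℕ) : ℝ :=
  ∑ j ∈ range N, ((2 : ℝ) ^ N * N !) / ((2 : ℝ) ^ j * j !) * Aher τ p ((2 * N : ℕ) : ℤ) (2 * j)

theorem abs_MsympCorrection_le (τ : ℝ) (p N : ℕ) :
    |MsympCorrection τ p N| ≤
      (p / 2 : ℕ) * ((p / 2 + 1 : ℕ) * p ! * ((|τ| + 1) * (2 * N)) ^ (p / 2)) := by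
  -- only the terms with `N - j ≤ p / 2` survive
  have hsupp : ∀ j ∈ range N, j ∉ Ico (N - p / 2) N →
      ((2 : ℝ) ^ N * N !) / ((2 : ℝ) ^ j * j !) * Aher τ p ((2 * N : ℕ) : ℤ) (2 * j) = 0 := by
    intro j hj hj'
    have := mem_range.mp hj
    rw [mem_Ico] at hj'
    rw [Aher_eq_zero_of_lt_abs τ p (by rw [abs_of_pos (by omega)]; omega), mul_zero]
  rw [MsympCorrection, ← sum_subset (fun j hj => mem_range.mpr (mem_Ico.mp hj).2) hsupp]
  calc _ ≤ _ := abs_sum_le_sum_abs _ _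
    _ ≤ (Ico (N - p / 2) N).card • ((p / 2 + 1 : ℕ) * p ! * ((|τ| + 1) * (2 * N)) ^ (p / 2) : ℝ) :=
        sum_le_card_nsmul _ _ _ fun j hj =>
          abs_two_pow_mul_factorial_div_mul_Aher_le τ p (mem_Ico.mp hj).2
    _ ≤ _ := by
        rw [nsmul_eq_mul, Nat.card_Ico]
        gcongr
        omega

theorem isBigO_MsympCorrection (τ : ℝ) (p : ℕ) :
    MsympCorrection τ p =O[atTop] fun N : ℕ => ((2 * N : ℕ) : ℝ) ^ (p / 2) :=
  IsBigO.of_bound ((p / 2 : ℕ) * ((p / 2 + 1 : ℕ) * p ! * (|τ| + 1) ^ (p / 2)))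
    (Eventually.of_forall fun N => by
      rw [Real.norm_eq_abs, norm_pow, Real.norm_natCast]
      refine (abs_MsympCorrection_le τ p N).trans (le_of_eq ?_)
      push_cast
      simp only [mul_pow]
      ring)

theorem Msymp_div_eq (τ : ℝ) (q N : ℕ) :
    Msymp τ (2 * q) N / ((2 : ℝ) ^ q * (N : ℝ) ^ (q + 1)) =
      (∑ k ∈ range (2 * N), Aher τ (2 * q) k k) / ((2 * N : ℕ) : ℝ) ^ (q + 1) -
        MsympCorrection τ (2 * q) N / ((2 * N : ℕ) : ℝ) ^ (q + 1) := by
  rw [Msymp, MsympCorrection]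
  push_cast
  ring

theorem symplectic_elliptic_holomorphic_moment_limit_general (τ : ℝ)
    (p : ℕ) (hp : p % 2 = 0) :
    Tendsto (fun N : ℕ => Msymp τ p N / ((2 : ℝ) ^ (p / 2) * (N : ℝ) ^ (p / 2 + 1)))
      atTop (nhds (τ ^ (p / 2) * ((p / 2 + 1 : ℕ) : ℝ)⁻¹ * (p.choose (p / 2) : ℝ))) := by
  obtain ⟨q, rfl⟩ : ∃ q, p = 2 * q := ⟨p / 2, by omega⟩
  rw [Nat.mul_div_cancel_left q two_pos]
  have h2N : Tendsto (fun N : ℕ => 2 * N) atTop atTop :=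
    tendsto_atTop_mono (fun N => Nat.le_mul_of_pos_left N two_pos) tendsto_id
  have hdiag := (tendsto_sum_range_Aher_two_mul_self_div_pow τ q).comp h2N
  have hbig := isBigO_MsympCorrection τ (2 * q)
  rw [Nat.mul_div_cancel_left q two_pos] at hbig
  have hcorr := (hbig.trans_isLittleO ((isLittleO_pow_pow_atTop_of_lt q.lt_succ_self).comp_tendsto
      (tendsto_natCast_atTop_atTop.comp h2N))).tendsto_div_nhds_zero
  simpa only [Msymp_div_eq, sub_zero, Function.comp_def] using hdiag.sub hcorr

/-- For `τ ∈ (0,1)` and even `p`, the holomorphic spectral moments of the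
symplectic elliptic Ginibre ensemble satisfy
`M^s_τ(p,N)/(2^{p/2} N^{p/2+1}) → τ^{p/2} (1/(p/2+1)) binom(p, p/2)` as `N → ∞`. -/
theorem symplectic_elliptic_holomorphic_moment_limit (τ : ℝ) (hτ0 : 0 < τ) (hτ1 : τ < 1)
    (p : ℕ) (hp : p % 2 = 0) :
    Tendsto (fun N : ℕ => Msymp τ p N / ((2 : ℝ) ^ (p / 2) * (N : ℝ) ^ (p / 2 + 1)))
      atTop (nhds (τ ^ (p / 2) * ((p / 2 + 1 : ℕ) : ℝ)⁻¹ * (p.choose (p / 2) : ℝ))) :=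
  symplectic_elliptic_holomorphic_moment_limit_general τ p hp
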